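/- arXiv:1904.08967 — 2 statements merged into one kernel-verified Lean document; each statement's English description precedes it below -/
import Mathlib

section
/- Define V : (ℝ_{≥0})^d → ℝ by V(x) = Σ_{i=1}^d (x_i(ln x_i − 1) + 1), with convention 0·ln 0 = 0. Let {x_n} be a sequence in (ℤ_{≥0})^d such that for each coordinate i, either x_{n,i} → ∞ or sup_n x_{n,i} < ∞, and at least one coordinate tends to infinity. Let η ∈ ℝ^d be a fixed vector with x_n + η ∈ (ℝ_{≥0})^d for all n. Then there exists a constant C > 0 such that for all n, V(x_n + η) − V(x_n) ≤ ln((x_n ∨ 1)^η) + C. -/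
open Filter Real Topology

-- per-coordinate function and its limit
lemma aux_tendsto (c : ℝ) :
    Tendsto (fun a : ℕ => (((a : ℝ) + c) * (Real.log ((a : ℝ) + c) - 1) + 1) -
      ((a : ℝ) * (Real.log a - 1) + 1) - c * Real.log (max (a : ℝ) 1))
      atTop (𝓝 0) := by
  have h1 : Tendsto (fun a : ℕ => (a : ℝ) * Real.log (1 + c / a)) atTop (𝓝 c) :=
    (Real.tendsto_mul_log_one_add_div_atTop c).comp tendsto_natCast_atTop_atTop
  have h2 : Tendsto (fun a : ℕ => Real.log (1 + c / a)) atTop (𝓝 0) := by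
    have : Tendsto (fun a : ℕ => 1 + c / (a : ℝ)) atTop (𝓝 1) := by
      simpa [div_eq_mul_inv] using (((tendsto_inv_atTop_zero.const_mul c).comp
        tendsto_natCast_atTop_atTop).const_add 1)
    simpa [Function.comp_def] using (Real.continuousAt_log one_ne_zero).tendsto.comp this
  have h3 : Tendsto (fun a : ℕ =>
      ((a : ℝ) * Real.log (1 + c / a) + c * Real.log (1 + c / a)) - c) atTop (𝓝 0) := by
    have := (h1.add (h2.const_mul c)).sub_const c
    simpa using this
  apply h3.congr'
  filter_upwards [eventually_gt_atTop (⌈|c|⌉₊ + 1)] with a ha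
  have ha1 : (1 : ℝ) ≤ (a : ℝ) := by exact_mod_cast Nat.one_le_iff_ne_zero.mpr (by omega)
  have hap : (0 : ℝ) < a := by linarith
  have hac : (0 : ℝ) < (a : ℝ) + c := by
    have : |c| ≤ (a : ℝ) - 1 := by
      have : (⌈|c|⌉₊ : ℝ) + 1 ≤ (a : ℝ) := by exact_mod_cast ha.le
      have := Nat.le_ceil |c|
      linarith
    have := abs_le.mp this
    linarith
  have hmax : max (a : ℝ) 1 = (a : ℝ) := max_eq_left ha1
  have hlog : Real.log (1 + c / a) = Real.log ((a : ℝ) + c) - Real.log a := by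
    rw [show (1 : ℝ) + c / a = ((a : ℝ) + c) / a by field_simp, Real.log_div hac.ne' hap.ne']
  rw [hlog, hmax]
  ring

theorem stmt_3 (d : ℕ) (x : ℕ → Fin d → ℕ) (η : Fin d → ℝ)
    (hdich : ∀ i, Filter.Tendsto (fun n => (x n i : ℝ)) Filter.atTop Filter.atTop ∨
      ∃ B : ℕ, ∀ n, x n i ≤ B)
    (hinf : ∃ i, Filter.Tendsto (fun n => (x n i : ℝ)) Filter.atTop Filter.atTop)
    (hnonneg : ∀ n i, 0 ≤ (x n i : ℝ) + η i) :
    ∃ C : ℝ, 0 < C ∧ ∀ n,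
      (∑ i, (((x n i : ℝ) + η i) * (Real.log ((x n i : ℝ) + η i) - 1) + 1)) -
      (∑ i, ((x n i : ℝ) * (Real.log (x n i) - 1) + 1)) ≤
      Real.log (∏ i, (max (x n i : ℝ) 1) ^ (η i)) + C := by
  have hB : ∀ i : Fin d, ∃ B : ℝ, ∀ a : ℕ,
      ((((a : ℝ) + η i) * (Real.log ((a : ℝ) + η i) - 1) + 1) -
        ((a : ℝ) * (Real.log a - 1) + 1)) - η i * Real.log (max (a : ℝ) 1) ≤ B := by
    intro i
    obtain ⟨B, hBb⟩ := (aux_tendsto (η i)).bddAbove_range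
    exact ⟨B, fun a => hBb ⟨a, rfl⟩⟩
  choose B hB using hB
  refine ⟨max (∑ i, B i) 0 + 1, by positivity, fun n => ?_⟩
  have hlogprod : Real.log (∏ i, (max (x n i : ℝ) 1) ^ (η i)) =
      ∑ i, η i * Real.log (max (x n i : ℝ) 1) := by
    rw [Real.log_prod]
    · exact Finset.sum_congr rfl fun i _ =>
        Real.log_rpow (lt_of_lt_of_le one_pos (le_max_right _ _)) _
    · exact fun i _ =>
        (Real.rpow_pos_of_pos (lt_of_lt_of_le one_pos (le_max_right _ _)) _).ne'
  rw [hlogprod, ← Finset.sum_sub_distrib]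
  have key : ∀ i ∈ Finset.univ, (((x n i : ℝ) + η i) * (Real.log ((x n i : ℝ) + η i) - 1) + 1) -
      ((x n i : ℝ) * (Real.log (x n i) - 1) + 1) ≤
      η i * Real.log (max (x n i : ℝ) 1) + B i := by
    intro i _
    have := hB i (x n i)
    linarith
  calc _ ≤ ∑ i, (η i * Real.log (max (x n i : ℝ) 1) + B i) := Finset.sum_le_sum key
    _ = (∑ i, η i * Real.log (max (x n i : ℝ) 1)) + ∑ i, B i := Finset.sum_add_distrib
    _ ≤ _ := by linarith [le_max_left (∑ i, B i) (0 : ℝ)]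
end

section
/- Let {x_n} be a sequence in ℤ^d_{≥0} and let 𝒞 be a finite set of vectors in ℤ^d_{≥0}. Then there exists a subsequence {x_{n_k}} and a finite ordered partition T^1, …, T^J of 𝒞 such that: (i) for y, y' in the same part, the limit lim_k (x_{n_k} ∨ 1)^y/(x_{n_k} ∨ 1)^{y'} exists in (0, ∞); and (ii) for y ∈ T^i and y' ∈ T^j with i < j, lim_k (x_{n_k} ∨ 1)^{y'}/(x_{n_k} ∨ 1)^y = 0. -/
open Filter Topology

private lemma aux_subseq_7 {ι : Type*} (s : Finset ι) (u : ι → ℕ → ENNReal) :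
    ∃ φ : ℕ → ℕ, StrictMono φ ∧
      ∀ i ∈ s, ∃ L, Filter.Tendsto (fun k => u i (φ k)) Filter.atTop (nhds L) := by
  classical
  induction s using Finset.induction_on with
  | empty => exact ⟨id, strictMono_id, by simp⟩
  | @insert i s hi ih =>
    obtain ⟨φ, hφ, h⟩ := ih
    obtain ⟨A, -, ψ, hψ, hA⟩ := isCompact_univ.tendsto_subseq
      (x := fun k => u i (φ k)) (fun n => Set.mem_univ _)
    refine ⟨φ ∘ ψ, hφ.comp hψ, ?_⟩
    intro j hj
    rcases Finset.mem_insert.mp hj with rfl | hj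
    · exact ⟨A, hA⟩
    · obtain ⟨B, hB⟩ := h j hj
      exact ⟨B, hB.comp hψ.tendsto_atTop⟩

theorem stmt_7 (d : ℕ) (x : ℕ → Fin d → ℕ) (𝒞 : Finset (Fin d → ℕ)) :
    ∃ φ : ℕ → ℕ, StrictMono φ ∧ ∃ J : ℕ, ∃ T : Fin J → Finset (Fin d → ℕ),
      (∀ y ∈ 𝒞, ∃! j : Fin J, y ∈ T j) ∧
      (∀ j : Fin J, ∀ y ∈ T j, y ∈ 𝒞) ∧
      (∀ j : Fin J, ∀ y ∈ T j, ∀ y' ∈ T j, ∃ C : ℝ, 0 < C ∧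
        Filter.Tendsto
          (fun k => (∏ i, (max (x (φ k) i : ℝ) 1) ^ (y i)) /
            (∏ i, (max (x (φ k) i : ℝ) 1) ^ (y' i)))
          Filter.atTop (nhds C)) ∧
      (∀ j₁ j₂ : Fin J, j₁ < j₂ → ∀ y ∈ T j₁, ∀ y' ∈ T j₂,
        Filter.Tendsto
          (fun k => (∏ i, (max (x (φ k) i : ℝ) 1) ^ (y' i)) /
            (∏ i, (max (x (φ k) i : ℝ) 1) ^ (y i)))
          Filter.atTop (nhds 0)) := by
  classical
  set g : (Fin d → ℕ) → ℕ → ℝ := fun y n => ∏ i, (max (x n i : ℝ) 1) ^ (y i) with hg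
  have gpos : ∀ y n, 0 < g y n := fun y n =>
    Finset.prod_pos fun i _ => pow_pos (lt_of_lt_of_le one_pos (le_max_right _ _)) _
  set u : ((Fin d → ℕ) × (Fin d → ℕ)) → ℕ → ENNReal :=
    fun p n => ENNReal.ofReal (g p.1 n / g p.2 n) with hu
  obtain ⟨φ, hφ, hconv⟩ := aux_subseq_7 (𝒞 ×ˢ 𝒞) u
  set L : ((Fin d → ℕ) × (Fin d → ℕ)) → ENNReal :=
    fun p => limUnder atTop (fun k => u p (φ k)) with hLdef
  have hL : ∀ y ∈ 𝒞, ∀ y' ∈ 𝒞,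
      Tendsto (fun k => u (y, y') (φ k)) atTop (nhds (L (y, y'))) := by
    intro y hy y' hy'
    obtain ⟨A, hA⟩ := hconv (y, y') (Finset.mem_product.mpr ⟨hy, hy'⟩)
    have : L (y, y') = A := by rw [hLdef]; exact hA.limUnder_eq
    rwa [this]
  have humul : ∀ y y' z n, u (y, z) n = u (y, y') n * u (y', z) n := by
    intro y y' z n
    simp only [hu]
    rw [← ENNReal.ofReal_mul (by positivity)]
    congr 1
    have h1 := (gpos y' n).ne'
    have h2 := (gpos z n).ne'
    field_simp
  have huinv : ∀ y y' n, u (y', y) n = (u (y, y') n)⁻¹ := by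
    intro y y' n
    simp only [hu]
    rw [← ENNReal.ofReal_inv_of_pos (div_pos (gpos y n) (gpos y' n)), inv_div]
  have hLone : ∀ y ∈ 𝒞, L (y, y) = 1 := by
    intro y hy
    refine tendsto_nhds_unique (hL y hy y hy) ?_
    have e : (fun k => u (y, y) (φ k)) = fun _ => (1 : ENNReal) := by
      funext k
      simp only [hu]
      rw [div_self (gpos y (φ k)).ne', ENNReal.ofReal_one]
    rw [e]; exact tendsto_const_nhds
  have hLinv : ∀ y ∈ 𝒞, ∀ y' ∈ 𝒞, L (y', y) = (L (y, y'))⁻¹ := by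
    intro y hy y' hy'
    refine tendsto_nhds_unique (hL y' hy' y hy) ?_
    have h := Filter.Tendsto.inv (hL y hy y' hy')
    have e : (fun k => u (y', y) (φ k)) = fun k => (u (y, y') (φ k))⁻¹ :=
      funext fun k => huinv y y' (φ k)
    rw [e]; exact h
  have hLmul : ∀ y ∈ 𝒞, ∀ y' ∈ 𝒞, ∀ z ∈ 𝒞,
      (L (y, y') ≠ 0 ∨ L (y', z) ≠ ⊤) → (L (y, y') ≠ ⊤ ∨ L (y', z) ≠ 0) →
      L (y, z) = L (y, y') * L (y', z) := by
    intro y hy y' hy' z hz h1 h2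
    refine tendsto_nhds_unique (hL y hy z hz) ?_
    have h := ENNReal.Tendsto.mul (hL y hy y' hy') h1 (hL y' hy' z hz) h2.symm
    have e : (fun k => u (y, z) (φ k)) = fun k => u (y, y') (φ k) * u (y', z) (φ k) :=
      funext fun k => humul y y' z (φ k)
    rw [e]; exact h
  set rank : (Fin d → ℕ) → ℕ := fun y => (𝒞.filter (fun z => L (z, y) = ⊤)).card with hrank
  have hsub : ∀ a ∈ 𝒞, ∀ b ∈ 𝒞, L (a, b) ≠ 0 →
      𝒞.filter (fun z => L (z, a) = ⊤) ⊆ 𝒞.filter (fun z => L (z, b) = ⊤) := by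
    intro a ha b hb h0 z hz
    rw [Finset.mem_filter] at hz ⊢
    refine ⟨hz.1, ?_⟩
    rw [hLmul z hz.1 a ha b hb (Or.inl (by rw [hz.2]; exact ENNReal.top_ne_zero)) (Or.inr h0),
      hz.2, ENNReal.top_mul h0]
  have hS : ∀ y ∈ 𝒞, ∀ y' ∈ 𝒞, L (y', y) = 0 → rank y < rank y' := by
    intro y hy y' hy' h0
    have hyy' : L (y, y') = ⊤ := by rw [hLinv y' hy' y hy, h0, ENNReal.inv_zero]
    have hss := hsub y hy y' hy' (by rw [hyy']; exact ENNReal.top_ne_zero)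
    refine Finset.card_lt_card ((Finset.ssubset_iff_of_subset hss).mpr ⟨y, ?_, ?_⟩)
    · exact Finset.mem_filter.mpr ⟨hy, hyy'⟩
    · intro hmem
      have := (Finset.mem_filter.mp hmem).2
      rw [hLone y hy] at this
      exact ENNReal.one_ne_top this
  have hE : ∀ y ∈ 𝒞, ∀ y' ∈ 𝒞, L (y, y') ≠ 0 → L (y, y') ≠ ⊤ → rank y = rank y' := by
    intro y hy y' hy' h0 ht
    have h0' : L (y', y) ≠ 0 := by
      rw [hLinv y hy y' hy']; simpa using ht
    have heq : 𝒞.filter (fun z => L (z, y) = ⊤) = 𝒞.filter (fun z => L (z, y') = ⊤) :=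
      Finset.Subset.antisymm (hsub y hy y' hy' h0) (hsub y' hy' y hy h0')
    simp only [hrank, heq]
  have hrankeq : ∀ y ∈ 𝒞, ∀ y' ∈ 𝒞, rank y = rank y' → L (y, y') ≠ 0 ∧ L (y, y') ≠ ⊤ := by
    intro y hy y' hy' he
    constructor
    · intro h0
      exact absurd he (hS y' hy' y hy h0).ne'
    · intro ht
      have h0 : L (y', y) = 0 := by rw [hLinv y hy y' hy', ht, ENNReal.inv_top]
      exact absurd he (hS y hy y' hy' h0).ne
  have hranklt : ∀ y ∈ 𝒞, ∀ y' ∈ 𝒞, rank y < rank y' → L (y', y) = 0 := by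
    intro y hy y' hy' hlt
    by_contra h0
    rcases eq_or_ne (L (y', y)) ⊤ with ht | ht
    · have h00 : L (y, y') = 0 := by rw [hLinv y' hy' y hy, ht, ENNReal.inv_top]
      exact absurd (hS y' hy' y hy h00) (lt_asymm hlt)
    · exact absurd (hE y' hy' y hy h0 ht) hlt.ne'
  set R : Finset ℕ := 𝒞.image rank with hR
  set e : Fin R.card ≃o {a // a ∈ R} := R.orderIsoOfFin rfl with he
  refine ⟨φ, hφ, R.card, fun j => 𝒞.filter (fun y => rank y = (e j : ℕ)), ?_, ?_, ?_, ?_⟩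
  · intro y hy
    have hmem : rank y ∈ R := Finset.mem_image_of_mem _ hy
    obtain ⟨j, hj⟩ := e.surjective ⟨rank y, hmem⟩
    refine ⟨j, Finset.mem_filter.mpr ⟨hy, by rw [hj]⟩, ?_⟩
    intro j' hj'
    apply e.injective
    apply Subtype.ext
    have h2 := (Finset.mem_filter.mp hj').2
    rw [hj]
    exact h2.symm
  · intro j y hy
    exact (Finset.mem_filter.mp hy).1
  · intro j y hy y' hy'
    obtain ⟨hyc, hry⟩ := Finset.mem_filter.mp hy
    obtain ⟨hyc', hry'⟩ := Finset.mem_filter.mp hy'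
    obtain ⟨h0, ht⟩ := hrankeq y hyc y' hyc' (hry.trans hry'.symm)
    refine ⟨(L (y, y')).toReal, ENNReal.toReal_pos h0 ht, ?_⟩
    have h2 : Tendsto (fun k => (u (y, y') (φ k)).toReal) atTop (nhds (L (y, y')).toReal) :=
      (ENNReal.tendsto_toReal ht).comp (hL y hyc y' hyc')
    have e2 : (fun k => (u (y, y') (φ k)).toReal) = fun k => g y (φ k) / g y' (φ k) :=
      funext fun k => ENNReal.toReal_ofReal (div_nonneg (gpos y _).le (gpos y' _).le)
    rw [e2] at h2
    exact h2
  · intro j₁ j₂ hjlt y hy y' hy'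
    obtain ⟨hyc, hry⟩ := Finset.mem_filter.mp hy
    obtain ⟨hyc', hry'⟩ := Finset.mem_filter.mp hy'
    have hlt : rank y < rank y' := by
      rw [hry, hry']
      exact Subtype.coe_lt_coe.mpr (e.strictMono hjlt)
    have h0 : L (y', y) = 0 := hranklt y hyc y' hyc' hlt
    have h2 : Tendsto (fun k => (u (y', y) (φ k)).toReal) atTop (nhds (0 : ℝ)) := by
      have := (ENNReal.tendsto_toReal (by rw [h0]; exact ENNReal.zero_ne_top)).comp
        (hL y' hyc' y hyc)
      rw [h0] at this
      simpa [Function.comp_def] using this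
    have e2 : (fun k => (u (y', y) (φ k)).toReal) = fun k => g y' (φ k) / g y (φ k) :=
      funext fun k => ENNReal.toReal_ofReal (div_nonneg (gpos y' _).le (gpos y _).le)
    rw [e2] at h2
    exact h2
end
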